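/- arXiv:1803.04949 — 2 statements merged into one kernel-verified Lean document; each statement's English description precedes it below -/
import Mathlib

section
/- Let G be a finite abelian group of odd order with exponent e, and let q : G → circle be a non-degenerate quadratic form (meaning q(n·g) = q(g)^(n²) for all n ∈ ℤ and ∂q(g,h) = q(g)q(h)q(g+h)⁻¹ is a non-degenerate symmetric bicharacter). Then the map b(g,h) := ∂q(g,h)^((e+1)/2) is a non-degenerate symmetric bicharacter on G satisfying b(g,g) = q(g)⁻¹ for all g ∈ G. -/
/-!
Since `e` is odd, `m := (e + 1) / 2` is an inverse of `2` modulo `e`, so `x ↦ x ^ m` is a square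
root on the elements killed by `e`. Every value of `q` is killed by `e`: if `e • g = 0` then
`q g ^ (e ^ 2) = q (e • g) = 1` and `q g = q ((e + 1) • g) = q g ^ ((e + 1) ^ 2)`, so `q g ^ e` has
order dividing both `e` and `2`. Hence every value of `∂q = polarization q` is killed by `e` too,
so raising to the power `m` preserves symmetry, bilinearity and non-degeneracy, and
`∂q g g = q g ^ (-2)` gives `b g g = (q g)⁻¹`.
-/

lemma eq_one_of_sq_eq_one_of_pow_odd {M : Type*} [Monoid M] {x : M} {n : ℕ} (hn : Odd n)
    (hsq : x ^ 2 = 1) (hpow : x ^ n = 1) : x = 1 := by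
  obtain ⟨k, rfl⟩ := hn
  rwa [pow_succ, pow_mul, hsq, one_pow, one_mul] at hpow

lemma sq_pow_half_succ {M : Type*} [Monoid M] {x : M} {n : ℕ} (hn : Odd n) (hx : x ^ n = 1) :
    (x ^ ((n + 1) / 2)) ^ 2 = x := by
  obtain ⟨k, rfl⟩ := hn
  rw [← pow_mul, show (2 * k + 1 + 1) / 2 * 2 = 2 * k + 1 + 1 by omega, pow_succ, hx, one_mul]

lemma pow_eq_one_of_nsmul_eq_zero {G M : Type*} [AddGroup G] [Group M] {q : G → M}
    (hq : ∀ (n : ℤ) (g : G), q (n • g) = q g ^ (n ^ 2)) {n : ℕ} (hn : Odd n) {g : G}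
    (hg : n • g = 0) : q g ^ n = 1 := by
  have hq0 : q 0 = 1 := by simpa using hq 0 0
  have hsq : q g ^ (n ^ 2) = 1 := by
    have h := hq n g
    rw [natCast_zsmul, hg, hq0] at h
    exact_mod_cast h.symm
  have hsucc : q g ^ ((n + 1) ^ 2) = q g := by
    have h := hq (n + 1) g
    rw [add_zsmul, natCast_zsmul, hg, zero_add, one_zsmul] at h
    exact_mod_cast h.symm
  apply eq_one_of_sq_eq_one_of_pow_odd hn
  · rwa [show (n + 1) ^ 2 = n ^ 2 + n * 2 + 1 by ring, pow_succ, pow_add, hsq, one_mul,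
      mul_eq_right, pow_mul] at hsucc
  · rw [← pow_mul, ← sq, hsq]

section Polarization

variable {G M : Type*} [AddCommGroup G] [CommGroup M]

def polarization (q : G → M) (g h : G) : M := q g * q h * (q (g + h))⁻¹

lemma polarization_comm (q : G → M) (g h : G) : polarization q g h = polarization q h g := by
  rw [polarization, polarization, add_comm, mul_comm (q g)]

lemma polarization_self {q : G → M} (hq : ∀ (n : ℤ) (g : G), q (n • g) = q g ^ (n ^ 2)) (g : G) :
    polarization q g g = (q g ^ 2)⁻¹ := by
  have h := hq 2 g
  rw [two_zsmul] at h
  rw [polarization, h]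
  group

lemma polarization_pow_eq_one {q : G → M} {n : ℕ} (hqn : ∀ g, q g ^ n = 1) (g h : G) :
    polarization q g h ^ n = 1 := by
  simp only [polarization, mul_pow, inv_pow, hqn, mul_one, inv_one]

end Polarization

/-- If `G` is a finite abelian group of odd order with exponent `e` and
`q` is a non-degenerate quadratic form on `G`, then `b g h := (∂q g h) ^ ((e+1)/2)`
is a non-degenerate symmetric bicharacter with `b g g = (q g)⁻¹`. -/
theorem stmt2 {G : Type*} [AddCommGroup G] [Fintype G]
    (hodd : Odd (Fintype.card G))
    (q : G → Circle)
    (hq : ∀ (n : ℤ) (g : G), q (n • g) = q g ^ (n ^ 2))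
    (hbi : ∀ g h k : G,
      q (g + h) * q k * (q (g + h + k))⁻¹ =
        (q g * q k * (q (g + k))⁻¹) * (q h * q k * (q (h + k))⁻¹))
    (hnd : ∀ g : G, (∀ h, q g * q h * (q (g + h))⁻¹ = 1) → g = 0) :
    let e : ℕ := AddMonoid.exponent G
    let b : G → G → Circle := fun g h => (q g * q h * (q (g + h))⁻¹) ^ ((e + 1) / 2)
    (∀ g h, b g h = b h g) ∧
    (∀ g h k, b (g + h) k = b g k * b h k) ∧
    (∀ g, (∀ h, b g h = 1) → g = 0) ∧
    (∀ g, b g g = (q g)⁻¹) := by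
  intro e b
  have he : Odd e := hodd.of_dvd_nat AddGroup.exponent_dvd_card
  have hqe : ∀ g, q g ^ e = 1 := fun g =>
    pow_eq_one_of_nsmul_eq_zero hq he (AddMonoid.exponent_nsmul_eq_zero g)
  refine ⟨fun g h => ?_, fun g h k => ?_, fun g hg => hnd g fun h => ?_, fun g => ?_⟩
  · exact congrArg (· ^ ((e + 1) / 2)) (polarization_comm q g h)
  · exact (congrArg (· ^ ((e + 1) / 2)) (hbi g h k)).trans (mul_pow _ _ _)
  · change polarization q g h = 1
    rw [← sq_pow_half_succ he (polarization_pow_eq_one hqe g h)]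
    exact (congrArg (· ^ 2) (hg h)).trans (one_pow 2)
  · change polarization q g g ^ ((e + 1) / 2) = _
    rw [polarization_self hq, inv_pow, ← pow_mul, mul_comm, pow_mul, sq_pow_half_succ he (hqe g)]
end

section
/- Let G be a finite abelian group of odd order with non-degenerate symmetric bicharacter b, and choose a partition G = G₊ ⊔ {0} ⊔ (−G₊). The generalized metaplectic fusion ring based on G, with basis {1, α, ρ, αρ} ∪ {σ_h : h ∈ G₊} and the fusion rules α² = 1, α·σ_g = σ_g, α·ρ = αρ, ρ² = 1 + Σ_{g∈G₊} σ_g, σ_g·σ_g = 1 + α + σ_{|2g|}, and σ_g·σ_h = σ_{|g+h|} + σ_{|g−h|} for g ≠ h in G₊ (with σ_0 interpreted as 1 + α), is a commutative associative unital ring of rank (|G|+7)/2. -/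
namespace MPFusion

variable {G : Type*} [AddCommGroup G] [DecidableEq G]

/-- The basis `{1, α, ρ, αρ} ∪ {σ_h : h ∈ G₊}` of the generalized metaplectic fusion
ring: `Sum.inl (a, r)` encodes `α^a ρ^r` and `Sum.inr h` encodes `σ_h`. -/
noncomputable def sig (Gpos : Finset G)
    (hpart : (0 : G) ∉ Gpos ∧ ∀ g : G, g ≠ 0 → Xor' (g ∈ Gpos) (-g ∈ Gpos))
    (x : G) : ((Bool × Bool) ⊕ {h : G // h ∈ Gpos}) →₀ ℤ :=
  if hx : x = 0 then
    Finsupp.single (Sum.inl (false, false)) 1 + Finsupp.single (Sum.inl (true, false)) 1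
  else
    Finsupp.single (Sum.inr ⟨if x ∈ Gpos then x else -x, by
      split_ifs with h
      · exact h
      · rcases hpart.2 x hx with h' | h'
        · exact absurd h'.1 h
        · exact h'.1⟩) 1

/-- Multiplication of basis elements of the generalized metaplectic fusion ring:
`α² = 1`, `α·ρ = αρ`, `α·σ_g = σ_g`, `ρ² = 1 + Σ_{g∈G₊} σ_g`,
`σ_g·σ_h = σ_{|g+h|} + σ_{|g-h|}` (with `σ_0 = 1 + α`, so in particular
`σ_g·σ_g = 1 + α + σ_{|2g|}`). -/
noncomputable def bmul [Fintype G] (Gpos : Finset G)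
    (hpart : (0 : G) ∉ Gpos ∧ ∀ g : G, g ≠ 0 → Xor' (g ∈ Gpos) (-g ∈ Gpos)) :
    ((Bool × Bool) ⊕ {h : G // h ∈ Gpos}) → ((Bool × Bool) ⊕ {h : G // h ∈ Gpos}) →
      ((Bool × Bool) ⊕ {h : G // h ∈ Gpos}) →₀ ℤ
  | Sum.inl (a, false), Sum.inl (b, r) => Finsupp.single (Sum.inl (xor a b, r)) 1
  | Sum.inl (a, true), Sum.inl (b, false) => Finsupp.single (Sum.inl (xor a b, true)) 1
  | Sum.inl (a, true), Sum.inl (b, true) =>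
      Finsupp.single (Sum.inl (xor a b, false)) 1 +
        ∑ h : {h : G // h ∈ Gpos}, Finsupp.single (Sum.inr h) 1
  | Sum.inl (_, false), Sum.inr h => Finsupp.single (Sum.inr h) 1
  | Sum.inl (_, true), Sum.inr _ =>
      Finsupp.single (Sum.inl (false, true)) 1 + Finsupp.single (Sum.inl (true, true)) 1
  | Sum.inr h, Sum.inl (_, false) => Finsupp.single (Sum.inr h) 1
  | Sum.inr _, Sum.inl (_, true) =>
      Finsupp.single (Sum.inl (false, true)) 1 + Finsupp.single (Sum.inl (true, true)) 1
  | Sum.inr g, Sum.inr h => sig Gpos hpart ((g : G) + h) + sig Gpos hpart ((g : G) - h)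

/-- The multiplication of the generalized metaplectic fusion ring, extended
`ℤ`-bilinearly. -/
noncomputable def mul [Fintype G] (Gpos : Finset G)
    (hpart : (0 : G) ∉ Gpos ∧ ∀ g : G, g ≠ 0 → Xor' (g ∈ Gpos) (-g ∈ Gpos))
    (x y : ((Bool × Bool) ⊕ {h : G // h ∈ Gpos}) →₀ ℤ) :
    ((Bool × Bool) ⊕ {h : G // h ∈ Gpos}) →₀ ℤ :=
  x.sum fun a xa => y.sum fun b yb => (xa * yb) • bmul Gpos hpart a b

end MPFusion

/-!
Extend `σ` to all of `G` by `σ_{-x} = σ_x` and `σ_0 = 1 + α`; then `σ_x σ_y = σ_{x+y} + σ_{x-y}`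
holds for all `x y : G`. Summing it over `y` and using that translation permutes `G` gives
`σ_x · Σ_{G₊} σ = 1 + α + 2 Σ_{G₊} σ - σ_x`, which closes the multiplication table on the
elements `α^a`, `α^a ρ`, `σ_x`, `ρ + αρ`, `Σ_{G₊} σ`. Since the product is visibly commutative,
associativity amounts to left multiplications commuting, `x (y z) = y (x z)`, and by
trilinearity this only has to be checked on basis elements, where the table settles it.
-/

open Finset
open Finsupp (single)

namespace MPFusion

variable {G : Type*} [AddCommGroup G] {Gpos : Finset G}

section Partition

variable (hpart : (0 : G) ∉ Gpos ∧ ∀ g : G, g ≠ 0 → Xor' (g ∈ Gpos) (-g ∈ Gpos))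
include hpart

theorem eq_zero_or_exists_mem_pos (x : G) : x = 0 ∨ ∃ g ∈ Gpos, g = x ∨ -g = x := by
  by_cases hx : x = 0
  · exact .inl hx
  · rcases hpart.2 x hx with ⟨h, -⟩ | ⟨h, -⟩
    · exact .inr ⟨x, h, .inl rfl⟩
    · exact .inr ⟨-x, h, .inr (neg_neg x)⟩

theorem neg_notMem_pos {g : G} (hg : g ∈ Gpos) : -g ∉ Gpos :=
  (hpart.2 g (ne_of_mem_of_not_mem hg hpart.1)).elim (·.2) (absurd hg ·.2)

theorem induction_on_pos {P : G → Prop} (zero : P 0) (pos : ∀ g ∈ Gpos, P g)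
    (neg : ∀ x, P x → P (-x)) (x : G) : P x := by
  rcases eq_zero_or_exists_mem_pos hpart x with rfl | ⟨g, hg, rfl | rfl⟩
  exacts [zero, pos g hg, neg g (pos g hg)]

theorem sum_univ_eq_add_sum_pos_add_sum_neg [Fintype G] {M : Type*} [AddCommMonoid M]
    (F : G → M) : ∑ x, F x = F 0 + ∑ g ∈ Gpos, F g + ∑ g ∈ Gpos, F (-g) := by
  have hdisj : Disjoint Gpos (Gpos.map (Equiv.neg G).toEmbedding) := by
    simp only [Finset.disjoint_left, mem_map_equiv, Equiv.neg_symm, Equiv.neg_apply]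
    exact fun g hg => neg_notMem_pos hpart hg
  have hzero : (0 : G) ∉ Gpos.disjUnion _ hdisj := by simpa using hpart.1
  have huniv : (univ : Finset G) = cons 0 (Gpos.disjUnion _ hdisj) hzero := by
    ext x
    rcases eq_zero_or_exists_mem_pos hpart x with rfl | ⟨g, hg, rfl | rfl⟩
    · simp
    · simp [hg]
    · simp [hg]
  rw [huniv, sum_cons, sum_disjUnion, sum_map, add_assoc]
  rfl

theorem card_eq_two_mul_card_pos_add_one [Fintype G] : Fintype.card G = 2 * #Gpos + 1 := by
  have := sum_univ_eq_add_sum_pos_add_sum_neg hpart (fun _ => 1)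
  simp only [sum_const, smul_eq_mul, mul_one, card_univ] at this
  omega

theorem card_basis [Fintype G] :
    Fintype.card ((Bool × Bool) ⊕ {g : G // g ∈ Gpos}) = (Fintype.card G + 7) / 2 := by
  simp only [card_eq_two_mul_card_pos_add_one hpart, Fintype.card_sum, Fintype.card_prod,
    Fintype.card_bool, Fintype.card_coe]
  omega

end Partition

variable [DecidableEq G]

variable {hpart : (0 : G) ∉ Gpos ∧ ∀ g : G, g ≠ 0 → Xor' (g ∈ Gpos) (-g ∈ Gpos)}

local notation "σ" => sig Gpos hpart
local notation "V" => (Bool × Bool) ⊕ {g : G // g ∈ Gpos} →₀ ℤ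

theorem sig_zero : σ 0 = single (Sum.inl (false, false)) 1 + single (Sum.inl (true, false)) 1 :=
  dif_pos rfl

theorem sig_coe (g : {g : G // g ∈ Gpos}) : σ g = single (Sum.inr g) 1 := by
  rw [sig, dif_neg (ne_of_mem_of_not_mem g.2 hpart.1)]
  simp [g.2]

theorem sig_of_mem {g : G} (hg : g ∈ Gpos) : σ g = single (Sum.inr ⟨g, hg⟩) 1 :=
  sig_coe ⟨g, hg⟩

theorem sig_neg_coe (g : {g : G // g ∈ Gpos}) : σ (-g) = single (Sum.inr g) 1 := by
  rw [sig, dif_neg (neg_ne_zero.2 (ne_of_mem_of_not_mem g.2 hpart.1))]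
  simp [neg_notMem_pos hpart g.2]

theorem sig_neg (x : G) : σ (-x) = σ x := by
  rcases eq_zero_or_exists_mem_pos hpart x with rfl | ⟨g, hg, rfl | rfl⟩
  · rw [neg_zero]
  · exact (sig_neg_coe ⟨g, hg⟩).trans (sig_coe ⟨g, hg⟩).symm
  · rw [neg_neg]
    exact (sig_coe ⟨g, hg⟩).trans (sig_neg_coe ⟨g, hg⟩).symm

theorem sig_zero_or_exists_eq_single (x : G) :
    x = 0 ∨ ∃ g : {g : G // g ∈ Gpos}, σ x = single (Sum.inr g) 1 := by
  rcases eq_zero_or_exists_mem_pos hpart x with rfl | ⟨g, hg, rfl | rfl⟩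
  · exact .inl rfl
  · exact .inr ⟨⟨g, hg⟩, sig_coe ⟨g, hg⟩⟩
  · exact .inr ⟨⟨g, hg⟩, sig_neg_coe ⟨g, hg⟩⟩

theorem sig_add_add_sig_sub_comm (x y : G) : σ (x + y) + σ (x - y) = σ (y + x) + σ (y - x) := by
  rw [add_comm x, ← neg_sub y, sig_neg]

variable (Gpos) in
noncomputable def rhoSum : V := single (Sum.inl (false, true)) 1 + single (Sum.inl (true, true)) 1

variable (Gpos) in
noncomputable def sigmaSum : V := ∑ g : {g : G // g ∈ Gpos}, single (Sum.inr g) 1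

variable (hpart) in
theorem sigmaSum_eq_sum_sig : sigmaSum Gpos = ∑ g ∈ Gpos, σ g := by
  simp only [sigmaSum, ← sig_coe (hpart := hpart), sum_coe_sort]

variable [Fintype G]

variable (Gpos hpart) in
noncomputable def mulₗ : V →ₗ[ℤ] V →ₗ[ℤ] V :=
  Finsupp.linearCombination ℤ fun a => Finsupp.linearCombination ℤ (bmul Gpos hpart a)

local infixl:70 " ⋆ " => mulₗ Gpos hpart

theorem mul_eq_mulₗ (x y : V) : mul Gpos hpart x y = x ⋆ y := by
  simp only [mul, mulₗ, Finsupp.linearCombination_apply, LinearMap.finsupp_sum_apply,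
    LinearMap.smul_apply, Finsupp.smul_sum, mul_smul]

@[simp]
theorem single_mulₗ_single (a b) : single a 1 ⋆ single b 1 = bmul Gpos hpart a b := by
  simp [mulₗ]

theorem bmul_comm (a b) : bmul Gpos hpart a b = bmul Gpos hpart b a := by
  rcases a with ⟨a, _ | _⟩ | g <;> rcases b with ⟨b, _ | _⟩ | h <;>
    simp only [bmul, Bool.xor_comm]
  exact sig_add_add_sig_sub_comm _ _

theorem mulₗ_comm (x y : V) : x ⋆ y = y ⋆ x := by
  suffices h : mulₗ Gpos hpart = (mulₗ Gpos hpart).flip from LinearMap.congr_fun₂ h x y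
  ext a b
  simp [bmul_comm a b]

theorem bmul_one_left (b) : bmul Gpos hpart (Sum.inl (false, false)) b = single b 1 := by
  rcases b with ⟨b, _ | _⟩ | h <;> simp [bmul]

theorem one_mulₗ (x : V) : single (Sum.inl (false, false)) 1 ⋆ x = x := by
  suffices h : mulₗ Gpos hpart (single (Sum.inl (false, false)) 1) = LinearMap.id from
    LinearMap.congr_fun h x
  ext b
  simp [bmul_one_left]

theorem alpha_mulₗ_sig (a : Bool) (x : G) : single (Sum.inl (a, false)) 1 ⋆ σ x = σ x := by
  rcases sig_zero_or_exists_eq_single (hpart := hpart) x with rfl | ⟨g, hg⟩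
  · cases a <;> simp [sig_zero, bmul, add_comm]
  · simp [hg, bmul]

theorem rho_mulₗ_sig (a : Bool) (x : G) :
    single (Sum.inl (a, true)) 1 ⋆ σ x = rhoSum Gpos := by
  rcases sig_zero_or_exists_eq_single (hpart := hpart) x with rfl | ⟨g, hg⟩
  · cases a <;> simp [sig_zero, bmul, rhoSum, add_comm]
  · simp [hg, bmul, rhoSum]

theorem sig_mulₗ_rhoSum (x : G) : σ x ⋆ rhoSum Gpos = 2 • rhoSum Gpos := by
  rw [mulₗ_comm]
  simp only [rhoSum, map_add, LinearMap.add_apply, rho_mulₗ_sig, two_nsmul]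

theorem sig_mulₗ_sig (x y : G) : σ x ⋆ σ y = σ (x + y) + σ (x - y) := by
  have neg_left (x y : G) : σ (-x + y) + σ (-x - y) = σ (x + y) + σ (x - y) := by
    rw [add_comm, ← sig_neg (-x - y), ← sig_neg (-x + y)]
    congr 2 <;> abel
  have neg_right (x y : G) : σ (x + -y) + σ (x - -y) = σ (x + y) + σ (x - y) := by
    rw [add_comm, sub_neg_eq_add, ← sub_eq_add_neg]
  have zero_left (y : G) : σ 0 ⋆ σ y = σ (0 + y) + σ (0 - y) := by
    rw [sig_zero, map_add, LinearMap.add_apply, alpha_mulₗ_sig, alpha_mulₗ_sig, zero_add,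
      zero_sub, sig_neg]
  induction x using induction_on_pos hpart generalizing y with
  | zero => exact zero_left y
  | neg x hx => rw [sig_neg, hx, neg_left]
  | pos g hg =>
    induction y using induction_on_pos hpart with
    | zero => rw [mulₗ_comm, zero_left, add_zero, sub_zero, zero_add, zero_sub, sig_neg]
    | neg y hy => rw [sig_neg, hy, neg_right]
    | pos h hh =>
      rw [sig_of_mem hg, sig_of_mem hh, single_mulₗ_single]
      rfl

theorem sum_sig : ∑ x, σ x = σ 0 + 2 • sigmaSum Gpos := by
  rw [sum_univ_eq_add_sum_pos_add_sum_neg hpart, sigmaSum_eq_sum_sig hpart]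
  simp only [sig_neg, add_assoc, two_nsmul]

theorem sig_mulₗ_sigmaSum (x : G) :
    σ x ⋆ sigmaSum Gpos = σ 0 + 2 • sigmaSum Gpos - σ x := by
  rw [eq_sub_iff_add_eq, ← sum_sig (hpart := hpart), ← Equiv.sum_comp (Equiv.addLeft x),
    sum_univ_eq_add_sum_pos_add_sum_neg hpart, sigmaSum_eq_sum_sig hpart, map_sum]
  simp only [Equiv.coe_addLeft, add_zero, sig_mulₗ_sig, sum_add_distrib, ← sub_eq_add_neg]
  abel

theorem alpha_mulₗ_sigmaSum (a : Bool) :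
    single (Sum.inl (a, false)) 1 ⋆ sigmaSum Gpos = sigmaSum Gpos := by
  simp only [sigmaSum_eq_sum_sig hpart, map_sum, alpha_mulₗ_sig]

theorem rho_mulₗ_sigmaSum (a : Bool) :
    single (Sum.inl (a, true)) 1 ⋆ sigmaSum Gpos = #Gpos • rhoSum Gpos := by
  simp only [sigmaSum_eq_sum_sig hpart, map_sum, rho_mulₗ_sig, sum_const]

theorem alpha_mulₗ_rhoSum (a : Bool) :
    single (Sum.inl (a, false)) 1 ⋆ rhoSum Gpos = rhoSum Gpos := by
  cases a <;> simp [rhoSum, bmul, add_comm]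

theorem rho_mulₗ_rhoSum (a : Bool) :
    single (Sum.inl (a, true)) 1 ⋆ rhoSum Gpos = σ 0 + 2 • sigmaSum Gpos := by
  cases a <;> simp [rhoSum, bmul, sig_zero, sigmaSum] <;> abel

theorem alpha_mulₗ_single (a b r : Bool) :
    single (Sum.inl (a, false)) 1 ⋆ single (Sum.inl (b, r)) 1 =
      single (Sum.inl (xor a b, r)) 1 := by
  simp [bmul]

theorem rho_mulₗ_alpha (a b : Bool) :
    single (Sum.inl (a, true)) 1 ⋆ single (Sum.inl (b, false)) 1 =
      single (Sum.inl (xor a b, true)) 1 := by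
  simp [bmul]

theorem rho_mulₗ_rho (a b : Bool) :
    single (Sum.inl (a, true)) 1 ⋆ single (Sum.inl (b, true)) 1 =
      single (Sum.inl (xor a b, false)) 1 + sigmaSum Gpos := by
  simp [bmul, sigmaSum]

theorem sig_mulₗ_alpha (x : G) (a : Bool) : σ x ⋆ single (Sum.inl (a, false)) 1 = σ x := by
  rw [mulₗ_comm, alpha_mulₗ_sig]

theorem sig_mulₗ_rho (x : G) (a : Bool) :
    σ x ⋆ single (Sum.inl (a, true)) 1 = rhoSum Gpos := by
  rw [mulₗ_comm, rho_mulₗ_sig]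

theorem sig_mulₗ_left_comm (x y z : G) : σ x ⋆ (σ y ⋆ σ z) = σ y ⋆ (σ x ⋆ σ z) := by
  simp only [sig_mulₗ_sig, map_add]
  rw [← sig_neg (x - (y + z)), ← sig_neg (x - (y - z)), show x + (y + z) = y + (x + z) by abel,
    show -(x - (y + z)) = y - (x - z) by abel, show x + (y - z) = y + (x - z) by abel,
    show -(x - (y - z)) = y - (x + z) by abel]
  abel

theorem single_mulₗ_bmul_comm (a b c) :
    single a 1 ⋆ bmul Gpos hpart b c = single b 1 ⋆ bmul Gpos hpart a c := by
  rw [← single_mulₗ_single, ← single_mulₗ_single]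
  rcases a with ⟨a, _ | _⟩ | g <;> rcases b with ⟨b, _ | _⟩ | h <;>
    rcases c with ⟨c, _ | _⟩ | k
  case inr.inr.inr =>
    simp only [← sig_coe (hpart := hpart)]
    exact sig_mulₗ_left_comm _ _ _
  all_goals
    simp only [← sig_coe (hpart := hpart), alpha_mulₗ_single, rho_mulₗ_alpha, rho_mulₗ_rho,
      alpha_mulₗ_sig, rho_mulₗ_sig, sig_mulₗ_sig, sig_mulₗ_alpha, sig_mulₗ_rho,
      alpha_mulₗ_sigmaSum, rho_mulₗ_sigmaSum, sig_mulₗ_sigmaSum,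
      alpha_mulₗ_rhoSum, rho_mulₗ_rhoSum, sig_mulₗ_rhoSum, map_add, Bool.xor_left_comm] <;>
    first | exact sig_add_add_sig_sub_comm _ _ | abel

theorem mulₗ_left_comm (x y z : V) : x ⋆ (y ⋆ z) = y ⋆ (x ⋆ z) := by
  -- `T x y = (x ⋆ ·) ∘ₗ (y ⋆ ·)`; being trilinear, it is determined by its values on `single`s.
  let T := (LinearMap.llcomp ℤ V V V ∘ₗ mulₗ Gpos hpart).compl₂ (mulₗ Gpos hpart)
  suffices h : T = T.flip from LinearMap.congr_fun (LinearMap.congr_fun₂ h x y) z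
  ext a b c d
  simp [T, single_mulₗ_bmul_comm a b c]

theorem mulₗ_assoc (x y z : V) : x ⋆ y ⋆ z = x ⋆ (y ⋆ z) := by
  rw [mulₗ_comm, mulₗ_left_comm, mulₗ_comm z]

end MPFusion

theorem stmt18_general {G : Type*} [AddCommGroup G] [Fintype G] [DecidableEq G]
    (Gpos : Finset G)
    (hpart : (0 : G) ∉ Gpos ∧ ∀ g : G, g ≠ 0 → Xor' (g ∈ Gpos) (-g ∈ Gpos)) :
    (∀ x y, MPFusion.mul Gpos hpart x y = MPFusion.mul Gpos hpart y x) ∧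
    (∀ x y z, MPFusion.mul Gpos hpart (MPFusion.mul Gpos hpart x y) z =
      MPFusion.mul Gpos hpart x (MPFusion.mul Gpos hpart y z)) ∧
    (∀ x, MPFusion.mul Gpos hpart (Finsupp.single (Sum.inl (false, false)) 1) x = x) ∧
    (∀ x, MPFusion.mul Gpos hpart x (Finsupp.single (Sum.inl (false, false)) 1) = x) ∧
    Fintype.card ((Bool × Bool) ⊕ {h : G // h ∈ Gpos}) = (Fintype.card G + 7) / 2 := by
  open MPFusion in
  simp only [mul_eq_mulₗ]
  exact ⟨mulₗ_comm, mulₗ_assoc, one_mulₗ, fun x => (mulₗ_comm _ _).trans (one_mulₗ x),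
    card_basis hpart⟩

/-- For a finite abelian group `G` of odd order with a non-degenerate
symmetric bicharacter `b` and a choice of positives `G = G₊ ⊔ {0} ⊔ (−G₊)`, the
generalized metaplectic fusion ring with basis `{1, α, ρ, αρ} ∪ {σ_h : h ∈ G₊}` and the
stated fusion rules is a commutative associative unital ring of rank `(|G|+7)/2`. -/
theorem stmt18 {G : Type*} [AddCommGroup G] [Fintype G] [DecidableEq G]
    (hodd : Odd (Fintype.card G))
    (b : G → G → Circle)
    (hsym : ∀ g h, b g h = b h g)
    (hbi : ∀ g h k, b (g + h) k = b g k * b h k)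
    (hnd : ∀ g, (∀ h, b g h = 1) → g = 0)
    (Gpos : Finset G)
    (hpart : (0 : G) ∉ Gpos ∧ ∀ g : G, g ≠ 0 → Xor' (g ∈ Gpos) (-g ∈ Gpos)) :
    (∀ x y, MPFusion.mul Gpos hpart x y = MPFusion.mul Gpos hpart y x) ∧
    (∀ x y z, MPFusion.mul Gpos hpart (MPFusion.mul Gpos hpart x y) z =
      MPFusion.mul Gpos hpart x (MPFusion.mul Gpos hpart y z)) ∧
    (∀ x, MPFusion.mul Gpos hpart (Finsupp.single (Sum.inl (false, false)) 1) x = x) ∧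
    (∀ x, MPFusion.mul Gpos hpart x (Finsupp.single (Sum.inl (false, false)) 1) = x) ∧
    Fintype.card ((Bool × Bool) ⊕ {h : G // h ∈ Gpos}) = (Fintype.card G + 7) / 2 :=
  stmt18_general Gpos hpart
end
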